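/- arXiv:2004.14233 — 4 statements merged into one kernel-verified Lean document; each statement's English description precedes it below -/
import Mathlib

section
/- A functor from the empty category to a small category C has the left lifting property with respect to all functors that are surjective on objects and full if and only if C is a free category (i.e. isomorphic to the path category of some quiver). -/
open CategoryTheory

universe u

universe v₁ v₂ u₁ u₂

/-!
A path category lifts against a functor that is surjective on objects and full, one edge at a
time, and the lifting property passes to isomorphic categories.

Conversely, lifting `𝟭 C` against the composition functor on paths of non-identity morphisms of
`C` gives a section `L`, and `f ↦ (L f).length` is an additive grading in which only identities
have degree `0`. As `f` is the composite of the edges of `L f`, its degree is both the number of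
these edges and the sum of their (positive) degrees, so each edge has degree `1`: every morphism is
a composite of "atoms", morphisms of degree `1`. A second lift, against the composition functor on
paths of atoms, gives a section `M`, and the grading forces `M` to send each atom to the path
consisting of that atom alone, so `M` is inverse to composition.
-/

theorem Quiver.Path.exists_eq_toPath_of_length_eq_one {V : Type u₁} [Quiver.{v₁} V] {x y : V}
    (q : Quiver.Path x y) (h : q.length = 1) : ∃ e : x ⟶ y, q = e.toPath := by
  cases q with
  | nil => simp at h
  | cons q e =>
    have h0 : q.length = 0 := by simpa using h
    obtain rfl := Quiver.Path.eq_of_length_zero q h0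
    obtain rfl := Quiver.Path.eq_nil_of_length_zero q h0
    exact ⟨e, rfl⟩

namespace CategoryTheory

theorem Paths.exists_lift_comp_eq {V : Type u₁} [Quiver.{v₁} V] {X Y : Type*}
    [Category X] [Category Y] (p : X ⥤ Y) (hp : Function.Surjective p.obj) [p.Full]
    (H : Paths V ⥤ Y) : ∃ L : Paths V ⥤ X, L ⋙ p = H := by
  have hs (y : Y) : p.obj (Function.surjInv hp y) = y := Function.surjInv_eq hp y
  let φ : V ⥤q X :=
    { obj a := Function.surjInv hp (H.obj a)
      map e := p.preimage (eqToHom (hs _) ≫ H.map e.toPath ≫ eqToHom (hs _).symm) }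
  refine ⟨Paths.lift φ, Paths.ext_functor (funext fun a => hs (H.obj a)) fun a b e => ?_⟩
  exact (congrArg p.map (Paths.lift_toPath φ e)).trans (p.map_preimage _)

def IsIdentity {C : Type u₁} [Category.{v₁} C] {a b : C} (f : a ⟶ b) : Prop :=
  ∃ h : a = b, f = eqToHom h

theorem IsIdentity.map {C : Type u₁} [Category.{v₁} C] {D : Type u₂} [Category.{v₂} D] (F : C ⥤ D)
    {a b : C} {f : a ⟶ b} (hf : IsIdentity f) : IsIdentity (F.map f) := by
  obtain ⟨rfl, rfl⟩ := hf
  exact ⟨rfl, by simp⟩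

theorem Paths.isIdentity_of_length_eq_zero {V : Type u₂} [Quiver.{v₂} V] {x y : Paths V}
    (q : x ⟶ y) (h : q.length = 0) : IsIdentity q := by
  obtain rfl := Quiver.Path.eq_of_length_zero q h
  exact ⟨rfl, Quiver.Path.eq_nil_of_length_zero q h⟩

structure NonIdentityQuiver (C : Type u₁) where
  as : C

instance {C : Type u₁} [Category.{v₁} C] : Quiver.{v₁} (NonIdentityQuiver C) :=
  ⟨fun a b => {f : a.as ⟶ b.as // ¬ IsIdentity f}⟩

namespace NonIdentityQuiver

variable (C : Type u₁) [Category.{v₁} C]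

def compose : Paths (NonIdentityQuiver C) ⥤ C := Paths.lift ⟨NonIdentityQuiver.as, Subtype.val⟩

theorem compose_obj_surjective : Function.Surjective (compose C).obj := fun c => ⟨⟨c⟩, rfl⟩

theorem compose_full : (compose C).Full where
  map_surjective {a b} f := by
    by_cases hf : IsIdentity f
    · obtain ⟨h, rfl⟩ := hf
      have h' : a = b := congrArg NonIdentityQuiver.mk h
      exact ⟨eqToHom h', by simp [eqToHom_map]⟩
    · exact ⟨@Quiver.Hom.toPath (NonIdentityQuiver C) _ a b ⟨f, hf⟩, Paths.lift_toPath _ _⟩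

theorem not_isIdentity_compose_map_toPath {a b : NonIdentityQuiver C} (e : a ⟶ b) :
    ¬ IsIdentity ((compose C).map e.toPath) := by
  rw [compose, Paths.lift_toPath]
  exact e.property

end NonIdentityQuiver

section Atoms

variable {C : Type u₁} [Category.{v₁} C] {V : Type u₂} [Quiver.{v₂} V] (L : C ⥤ Paths V)

def pathLength {a b : C} (f : a ⟶ b) : ℕ := (L.map f).length

theorem pathLength_comp {a b c : C} (f : a ⟶ b) (g : b ⟶ c) :
    pathLength L (f ≫ g) = pathLength L f + pathLength L g := by
  rw [pathLength, L.map_comp]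
  exact Quiver.Path.length_comp _ _

theorem pathLength_eqToHom {a b : C} (h : a = b) : pathLength L (eqToHom h) = 0 := by
  subst h
  rw [eqToHom_refl, pathLength, L.map_id]
  rfl

theorem pathLength_eqToHom_comp_comp {a b a' b' : C} (ha : a' = a) (hb : b = b') (f : a ⟶ b) :
    pathLength L (eqToHom ha ≫ f ≫ eqToHom hb) = pathLength L f := by
  rw [pathLength_comp, pathLength_comp, pathLength_eqToHom, pathLength_eqToHom, zero_add, add_zero]

theorem pathLength_map_cons (P : Paths V ⥤ C) {x y z : V} (q : Quiver.Path x y) (e : y ⟶ z) :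
    pathLength L (P.map (q.cons e)) = pathLength L (P.map q) + pathLength L (P.map e.toPath) :=
  (congrArg (pathLength L) (P.map_comp q e.toPath)).trans (pathLength_comp L _ _)

@[ext]
structure AtomQuiver (L : C ⥤ Paths V) where
  as : C

instance : Quiver.{v₁} (AtomQuiver L) :=
  ⟨fun a b => {f : a.as ⟶ b.as // pathLength L f = 1}⟩

namespace AtomQuiver

def compose : Paths (AtomQuiver L) ⥤ C := Paths.lift ⟨AtomQuiver.as, Subtype.val⟩

theorem compose_obj_surjective : Function.Surjective (compose L).obj := fun c => ⟨⟨c⟩, rfl⟩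

theorem pathLength_compose_map {a b : AtomQuiver L} (r : Quiver.Path a b) :
    pathLength L ((compose L).map r) = r.length := by
  induction r with
  | nil => exact pathLength_eqToHom L rfl
  | cons r e ih =>
    calc pathLength L ((compose L).map (r.cons e))
        = pathLength L ((compose L).map r) + pathLength L e.val :=
          (congrArg _ (Paths.lift_cons _ _ _)).trans (pathLength_comp L _ _)
      _ = (r.cons e).length := by rw [ih, e.property]; rfl

theorem toPath_eq_of_val_eq {x y x' y' : AtomQuiver L} (a : x ⟶ y) (b : x' ⟶ y')
    (hx : x' = x) (hy : y = y')
    (h : b.val = eqToHom (congrArg as hx) ≫ a.val ≫ eqToHom (congrArg as hy)) :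
    (Paths.of _).map b = eqToHom (congrArg (Paths.of _).obj hx) ≫ (Paths.of _).map a ≫
      eqToHom (congrArg (Paths.of _).obj hy) := by
  subst hx hy
  simp only [eqToHom_refl, Category.id_comp, Category.comp_id] at h ⊢
  rw [Subtype.ext h]

theorem compose_comp_eq_id (M : C ⥤ Paths (AtomQuiver L)) (hM : M ⋙ compose L = 𝟭 C) :
    compose L ⋙ M = 𝟭 _ := by
  have hobj (x : AtomQuiver L) : M.obj x.as = x := AtomQuiver.ext (Functor.congr_obj hM x.as)
  refine Paths.ext_functor (funext hobj) fun x y a => ?_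
  have hMa : (compose L).map (M.map a.val) =
      eqToHom (Functor.congr_obj hM x.as) ≫ a.val ≫ eqToHom (Functor.congr_obj hM y.as).symm := by
    simpa using Functor.congr_hom hM a.val
  have hlen : (M.map a.val).length = 1 := by
    rw [← pathLength_compose_map L (M.map a.val), hMa, pathLength_eqToHom_comp_comp, a.property]
  obtain ⟨b, hb⟩ := Quiver.Path.exists_eq_toPath_of_length_eq_one _ hlen
  have hb' : (compose L).map b.toPath = b.val := Paths.lift_toPath _ b
  rw [hb, hb'] at hMa
  exact (congrArg M.map (Paths.lift_toPath _ a)).trans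
    (hb.trans (toPath_eq_of_val_eq L a b (hobj x) (hobj y).symm hMa))

variable {L} {P : Paths V ⥤ C} (hL : L ⋙ P = 𝟭 C)
include hL

theorem pathLength_map_map {a b : C} (f : a ⟶ b) :
    pathLength L (P.map (L.map f)) = pathLength L f :=
  (congrArg (pathLength L) (Functor.congr_hom hL f)).trans (pathLength_eqToHom_comp_comp L _ _ f)

theorem isIdentity_of_pathLength_eq_zero {a b : C} {f : a ⟶ b} (h : pathLength L f = 0) :
    IsIdentity f := by
  have hLP {a b : C} (f : a ⟶ b) (h : pathLength L f = 0) : IsIdentity ((L ⋙ P).map f) :=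
    (Paths.isIdentity_of_length_eq_zero (L.map f) h).map P
  rw [hL] at hLP
  exact hLP f h

variable (hP : ∀ {x y : V} (e : x ⟶ y), ¬ IsIdentity (P.map e.toPath))
include hP

theorem pathLength_map_toPath_ne_zero {x y : V} (e : x ⟶ y) :
    pathLength L (P.map e.toPath) ≠ 0 :=
  fun h => hP e (isIdentity_of_pathLength_eq_zero hL h)

theorem length_le_pathLength_map {x y : V} (q : Quiver.Path x y) :
    q.length ≤ pathLength L (P.map q) := by
  induction q with
  | nil => exact Nat.zero_le _
  | cons q e ih =>
    have he := pathLength_map_toPath_ne_zero hL hP e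
    rw [pathLength_map_cons, Quiver.Path.length_cons]
    omega

theorem exists_compose_map_eq_of_pathLength_le {x y : V} (q : Quiver.Path x y)
    (h : pathLength L (P.map q) ≤ q.length) :
    ∃ r : (Paths.of (AtomQuiver L)).obj ⟨P.obj x⟩ ⟶ (Paths.of _).obj ⟨P.obj y⟩,
      (compose L).map r = P.map q := by
  induction q with
  | nil => exact ⟨.nil, (P.map_id _).symm⟩
  | cons q e ih =>
    rw [pathLength_map_cons, Quiver.Path.length_cons] at h
    have hq := length_le_pathLength_map hL hP q
    have he := pathLength_map_toPath_ne_zero hL hP e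
    obtain ⟨r, hr⟩ := ih (by omega)
    have he1 : pathLength L (P.map e.toPath) = 1 := by omega
    refine ⟨Quiver.Path.cons r ⟨P.map e.toPath, he1⟩, ?_⟩
    exact (Paths.lift_cons _ _ _).trans
      ((congrArg (· ≫ P.map e.toPath) hr).trans (P.map_comp q e.toPath).symm)

theorem exists_compose_map_eq {a b : C} (f : a ⟶ b) :
    ∃ g : (Paths.of (AtomQuiver L)).obj ⟨a⟩ ⟶ (Paths.of _).obj ⟨b⟩, (compose L).map g = f := by
  have h {a b : C} (f : a ⟶ b) : ∃ g : (Paths.of (AtomQuiver L)).obj ⟨(L ⋙ P).obj a⟩ ⟶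
      (Paths.of _).obj ⟨(L ⋙ P).obj b⟩, (compose L).map g = (L ⋙ P).map f :=
    exists_compose_map_eq_of_pathLength_le hL hP (L.map f) (pathLength_map_map hL f).le
  rw [hL] at h
  exact h f

theorem compose_full : (compose L).Full where
  map_surjective f := exists_compose_map_eq hL hP f

end AtomQuiver

end Atoms

/-- Arrows moved one universe up: the path category of the atoms must be small to be lifted
against, whereas the theorem asks for a quiver in `Quiver.{u + 1}`. -/
def ULiftQuiver (V : Type u₁) : Type u₁ := V

namespace ULiftQuiver

variable (V : Type u₁) [Quiver.{v₁} V]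

instance : Quiver.{v₁ + 1} (ULiftQuiver V) :=
  ⟨fun a b => ULift.{v₁ + 1, v₁} (@Quiver.Hom V _ a b)⟩

def up : V ⥤q ULiftQuiver V where
  obj := id
  map e := ULift.up e

def down : ULiftQuiver V ⥤q V where
  obj := id
  map e := ULift.down e

theorem freeMap_up_comp_freeMap_down :
    Cat.freeMap (up V) ⋙ Cat.freeMap (down V) = 𝟭 _ :=
  (Cat.freeMap_comp _ _).symm.trans (Cat.freeMap_id V)

theorem freeMap_down_comp_freeMap_up :
    Cat.freeMap (down V) ⋙ Cat.freeMap (up V) = 𝟭 _ :=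
  (Cat.freeMap_comp _ _).symm.trans (Cat.freeMap_id (ULiftQuiver V))

end ULiftQuiver

end CategoryTheory

/-- **Characterization of free categories via a lifting property.**
A functor from the empty category to a small category `C` has the left lifting
property with respect to all functors that are surjective on objects and full
if and only if `C` is a free category, i.e. isomorphic to the path category of
some quiver. -/
theorem llp_surjective_full_iff_free {C : Type u} [SmallCategory C] :
    (∀ {X Y : Type u} [SmallCategory X] [SmallCategory Y] (p : X ⥤ Y),
      Function.Surjective p.obj → p.Full →
      ∀ (G : Discrete PEmpty.{u + 1} ⥤ X) (H : C ⥤ Y),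
        Functor.empty C ⋙ H = G ⋙ p →
        ∃ L : C ⥤ X, Functor.empty C ⋙ L = G ∧ L ⋙ p = H) ↔
    ∃ (Q : Type u) (_ : Quiver.{u + 1} Q),
      ∃ (F : C ⥤ Paths Q) (G : Paths Q ⥤ C), F ⋙ G = 𝟭 C ∧ G ⋙ F = 𝟭 (Paths Q) := by
  constructor
  · intro hlift
    have hsection {X : Type u} [SmallCategory X] (p : X ⥤ C) (hp : Function.Surjective p.obj)
        (hfull : p.Full) : ∃ L : C ⥤ X, L ⋙ p = 𝟭 C :=
      (hlift p hp hfull (Functor.empty _) (𝟭 C) (Functor.empty_ext' _ _)).imp fun _ => And.right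
    obtain ⟨L, hL⟩ := hsection _ (NonIdentityQuiver.compose_obj_surjective C)
      (NonIdentityQuiver.compose_full C)
    obtain ⟨M, hM⟩ := hsection _ (AtomQuiver.compose_obj_surjective L)
      (AtomQuiver.compose_full hL (NonIdentityQuiver.not_isIdentity_compose_map_toPath C))
    refine ⟨ULiftQuiver (AtomQuiver L), inferInstance,
      M ⋙ Cat.freeMap (ULiftQuiver.up _), Cat.freeMap (ULiftQuiver.down _) ⋙ AtomQuiver.compose L,
      ?_, ?_⟩
    · rw [Functor.assoc, ← Functor.assoc (Cat.freeMap _), ULiftQuiver.freeMap_up_comp_freeMap_down,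
        Functor.id_comp, hM]
    · rw [Functor.assoc, ← Functor.assoc (AtomQuiver.compose L),
        AtomQuiver.compose_comp_eq_id L M hM, Functor.id_comp,
        ULiftQuiver.freeMap_down_comp_freeMap_up]
  · rintro ⟨Q, _, F, G, hFG, -⟩ X Y _ _ p hp hfull _ H -
    obtain ⟨L, hL⟩ := Paths.exists_lift_comp_eq p hp (G ⋙ H)
    refine ⟨F ⋙ L, Functor.empty_ext' _ _, ?_⟩
    rw [Functor.assoc, hL, ← Functor.assoc, hFG, Functor.id_comp]
end

section
/- In any model category, if every object is fibrant, then a morphism f : X ⟶ Y between cofibrant objects is a weak equivalence if and only if it is a homotopy equivalence, i.e. there exists g : Y ⟶ X such that g ∘ f is right homotopic to id_X and f ∘ g is right homotopic to id_Y. -/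
open CategoryTheory CategoryTheory.Limits

universe v u v' u'

/-- A model structure on a category `C`: three classes of morphisms (weak
equivalences, fibrations, cofibrations) satisfying the model category axioms:
two-out-of-three for weak equivalences, closure of all three classes under
retracts, the lifting axioms, and the two factorization axioms. -/
structure ModelStruct (C : Type u) [Category.{v} C] where
  W : MorphismProperty C
  Fib : MorphismProperty C
  Cof : MorphismProperty C
  /-- two-out-of-three: composition -/
  w_comp : ∀ {X Y Z : C} (f : X ⟶ Y) (g : Y ⟶ Z), W f → W g → W (f ≫ g)
  /-- two-out-of-three: left cancellation -/
  w_cancel_left : ∀ {X Y Z : C} (f : X ⟶ Y) (g : Y ⟶ Z), W f → W (f ≫ g) → W g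
  /-- two-out-of-three: right cancellation -/
  w_cancel_right : ∀ {X Y Z : C} (f : X ⟶ Y) (g : Y ⟶ Z), W g → W (f ≫ g) → W f
  /-- weak equivalences are closed under retracts -/
  w_retract : ∀ {X Y X' Y' : C} (f : X ⟶ Y) (g : X' ⟶ Y')
    (iX : X ⟶ X') (rX : X' ⟶ X) (iY : Y ⟶ Y') (rY : Y' ⟶ Y),
    iX ≫ rX = 𝟙 X → iY ≫ rY = 𝟙 Y → iX ≫ g = f ≫ iY → g ≫ rY = rX ≫ f →
    W g → W f
  /-- fibrations are closed under retracts -/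
  fib_retract : ∀ {X Y X' Y' : C} (f : X ⟶ Y) (g : X' ⟶ Y')
    (iX : X ⟶ X') (rX : X' ⟶ X) (iY : Y ⟶ Y') (rY : Y' ⟶ Y),
    iX ≫ rX = 𝟙 X → iY ≫ rY = 𝟙 Y → iX ≫ g = f ≫ iY → g ≫ rY = rX ≫ f →
    Fib g → Fib f
  /-- cofibrations are closed under retracts -/
  cof_retract : ∀ {X Y X' Y' : C} (f : X ⟶ Y) (g : X' ⟶ Y')
    (iX : X ⟶ X') (rX : X' ⟶ X) (iY : Y ⟶ Y') (rY : Y' ⟶ Y),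
    iX ≫ rX = 𝟙 X → iY ≫ rY = 𝟙 Y → iX ≫ g = f ≫ iY → g ≫ rY = rX ≫ f →
    Cof g → Cof f
  /-- trivial cofibrations lift against fibrations -/
  lift_trivCof : ∀ {A B X Y : C} (i : A ⟶ B) (p : X ⟶ Y),
    Cof i → W i → Fib p → HasLiftingProperty i p
  /-- cofibrations lift against trivial fibrations -/
  lift_trivFib : ∀ {A B X Y : C} (i : A ⟶ B) (p : X ⟶ Y),
    Cof i → Fib p → W p → HasLiftingProperty i p
  /-- factorization as a trivial cofibration followed by a fibration -/
  fact₁ : ∀ {X Y : C} (f : X ⟶ Y), ∃ (Z : C) (i : X ⟶ Z) (p : Z ⟶ Y),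
    Cof i ∧ W i ∧ Fib p ∧ i ≫ p = f
  /-- factorization as a cofibration followed by a trivial fibration -/
  fact₂ : ∀ {X Y : C} (f : X ⟶ Y), ∃ (Z : C) (i : X ⟶ Z) (p : Z ⟶ Y),
    Cof i ∧ Fib p ∧ W p ∧ i ≫ p = f

/-- Two morphisms `u v : A ⟶ B` are *right homotopic* if there is a path object
`B → P → B × B` (a factorization of the diagonal into a weak equivalence followed
by a fibration) together with `h : A ⟶ P` projecting to `(u, v)`. -/
def ModelStruct.RightHomotopic {C : Type u} [Category.{v} C] [HasBinaryProducts C]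
    (M : ModelStruct C) {A B : C} (u v : A ⟶ B) : Prop :=
  ∃ (P : C) (w : B ⟶ P) (p : P ⟶ B ⨯ B),
    M.W w ∧ M.Fib p ∧ w ≫ p = prod.lift (𝟙 B) (𝟙 B) ∧
    ∃ h : A ⟶ P, h ≫ p = prod.lift u v

/-!
Factor `f = i ≫ p`. If `f` is a weak equivalence, take `i` a trivial cofibration and `p` a
trivial fibration: fibrancy of `X` gives a retraction `r` of `i`, cofibrancy of `Y` a section
`s` of `p`, and `s ≫ r` is a homotopy inverse of `f` because `r ≫ i ∼ 𝟙` and `p ≫ s ∼ 𝟙`.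
Right homotopies out of a cofibrant object can be postcomposed with any map, because their path
object can be replaced by one whose map `B ⟶ P` is a cofibration, and such a path object maps
to every other one.

Conversely, if `f` has a homotopy inverse `g`, take `i` a cofibration and `p` a trivial
fibration. As `X` is fibrant, the homotopy extension property turns `f ≫ g ∼ 𝟙` into a strict
retraction `r` of `i` with `r ≫ i ∼ p ≫ g ≫ i`, which is a weak equivalence since `g ≫ f` is.
Then `f` is a retract of the weak equivalence `r ≫ i ≫ p ≫ s`.
-/

lemma CategoryTheory.HasLiftingProperty.exists_lift {C : Type u} [Category.{v} C]
    {A B E D : C} (i : A ⟶ B) (p : E ⟶ D) [HasLiftingProperty i p] {t : A ⟶ E} {b : B ⟶ D}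
    (w : t ≫ p = i ≫ b) : ∃ l : B ⟶ E, i ≫ l = t ∧ l ≫ p = b :=
  ⟨(CommSq.mk w).lift, by simp, by simp⟩

namespace ModelStruct

variable {C : Type u} [Category.{v} C] (M : ModelStruct C)

attribute [local simp] prod.lift_fst prod.lift_snd prod.lift_fst_assoc prod.lift_snd_assoc

lemma W_id (A : C) : M.W (𝟙 A) := by
  obtain ⟨Z, i, p, -, hiW, -, hip⟩ := M.fact₁ (𝟙 A)
  exact M.w_retract (𝟙 A) i (𝟙 A) (𝟙 A) i p (by simp) hip (by simp) (by simp [hip]) hiW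

lemma W_right_of_comp_eq_id {A B : C} {f : A ⟶ B} {g : B ⟶ A} (hf : M.W f)
    (h : f ≫ g = 𝟙 A) : M.W g :=
  M.w_cancel_left f g hf (h ▸ M.W_id A)

lemma W_left_of_comp_eq_id {A B : C} {f : A ⟶ B} {g : B ⟶ A} (hg : M.W g)
    (h : f ≫ g = 𝟙 A) : M.W f :=
  M.w_cancel_right f g hg (h ▸ M.W_id A)

lemma cof_comp {A B D : C} {f : A ⟶ B} {g : B ⟶ D} (hf : M.Cof f) (hg : M.Cof g) :
    M.Cof (f ≫ g) := by
  obtain ⟨E, a, b, ha, hb, hbW, hab⟩ := M.fact₂ (f ≫ g)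
  have := M.lift_trivFib f b hf hb hbW
  have := M.lift_trivFib g b hg hb hbW
  obtain ⟨l, hl, hlb⟩ := HasLiftingProperty.exists_lift (f ≫ g) b (t := a) (b := 𝟙 D)
    (by simp [hab])
  exact M.cof_retract (f ≫ g) a (𝟙 A) (𝟙 A) l b (by simp) hlb (by simpa using hl.symm)
    (by simp [hab]) ha

lemma fib_of_exists_lift {E D : C} (m : E ⟶ D)
    (h : ∀ {A B : C} (c : A ⟶ B), M.Cof c → M.W c → ∀ (t : A ⟶ E) (b : B ⟶ D),
      t ≫ m = c ≫ b → ∃ l : B ⟶ E, c ≫ l = t ∧ l ≫ m = b) :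
    M.Fib m := by
  obtain ⟨E', a, b, ha, haW, hb, hab⟩ := M.fact₁ m
  obtain ⟨l, hal, hlm⟩ := h a ha haW (𝟙 E) b (by simp [hab])
  exact M.fib_retract m b a l (𝟙 D) (𝟙 D) hal (by simp) (by simp [hab]) (by simp [hlm]) hb

lemma fib_comp {A B D : C} {f : A ⟶ B} {g : B ⟶ D} (hf : M.Fib f) (hg : M.Fib g) :
    M.Fib (f ≫ g) :=
  M.fib_of_exists_lift _ fun c hc hcW t b w => by
    have := M.lift_trivCof c f hc hcW hf
    have := M.lift_trivCof c g hc hcW hg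
    exact HasLiftingProperty.exists_lift c (f ≫ g) w

lemma exists_extension_of_fibrant [HasTerminal C] {A B X : C} (hX : M.Fib (terminal.from X))
    {i : A ⟶ B} (hi : M.Cof i) (hiW : M.W i) (a : A ⟶ X) : ∃ e : B ⟶ X, i ≫ e = a := by
  have := M.lift_trivCof i _ hi hiW hX
  obtain ⟨e, he, -⟩ := HasLiftingProperty.exists_lift i (terminal.from X) (t := a)
    (b := terminal.from B) (terminal.hom_ext _ _)
  exact ⟨e, he⟩

lemma exists_lift_of_cofibrant [HasInitial C] {A E D : C} (hA : M.Cof (initial.to A))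
    {p : E ⟶ D} (hp : M.Fib p) (hpW : M.W p) (b : A ⟶ D) : ∃ l : A ⟶ E, l ≫ p = b := by
  have := M.lift_trivFib _ p hA hp hpW
  obtain ⟨l, -, hl⟩ := HasLiftingProperty.exists_lift (initial.to A) p (t := initial.to E)
    (b := b) (initial.hom_ext _ _)
  exact ⟨l, hl⟩

lemma cofibrant_of_cof [HasInitial C] {A B : C} (hA : M.Cof (initial.to A)) {i : A ⟶ B}
    (hi : M.Cof i) : M.Cof (initial.to B) :=
  initial.hom_ext (initial.to A ≫ i) (initial.to B) ▸ M.cof_comp hA hi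

lemma fib_prod_fst [HasTerminal C] {X₁ X₂ : C} [HasBinaryProduct X₁ X₂]
    (h : M.Fib (terminal.from X₂)) : M.Fib (prod.fst : X₁ ⨯ X₂ ⟶ X₁) :=
  M.fib_of_exists_lift _ fun _ hc hcW t b w => by
    obtain ⟨e, he⟩ := M.exists_extension_of_fibrant h hc hcW (t ≫ prod.snd)
    exact ⟨prod.lift b e, by ext <;> simp [he, w], by simp⟩

section PathObject

variable [HasBinaryProducts C]

lemma exists_map_pathObject {B B' P P' : C} {w : B ⟶ P} {q : P ⟶ B ⨯ B} {w' : B' ⟶ P'}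
    {q' : P' ⟶ B' ⨯ B'} (hw : M.Cof w) (hwW : M.W w) (hd : w ≫ q = prod.lift (𝟙 B) (𝟙 B))
    (hq' : M.Fib q') (hd' : w' ≫ q' = prod.lift (𝟙 B') (𝟙 B')) (k : B ⟶ B') :
    ∃ K : P ⟶ P', K ≫ q' = q ≫ prod.map k k := by
  have := M.lift_trivCof w q' hw hwW hq'
  obtain ⟨K, -, hK⟩ := HasLiftingProperty.exists_lift w q' (t := k ≫ w')
    (b := q ≫ prod.map k k) (by simp [hd', reassoc_of% hd])
  exact ⟨K, hK⟩

lemma rightHomotopic_retraction_comp {A B : C} {j : A ⟶ B} (hj : M.Cof j) (hjW : M.W j)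
    {k : B ⟶ A} (hjk : j ≫ k = 𝟙 A) : M.RightHomotopic (k ≫ j) (𝟙 B) := by
  obtain ⟨P, w, q, -, hwW, hq, hd⟩ := M.fact₁ (prod.lift (𝟙 B) (𝟙 B))
  have := M.lift_trivCof j q hj hjW hq
  obtain ⟨H, -, hH⟩ := HasLiftingProperty.exists_lift j q (t := j ≫ w)
    (b := prod.lift (k ≫ j) (𝟙 B)) (by simp [hd, reassoc_of% hjk])
  exact ⟨P, w, q, hwW, hq, hd, H, hH⟩

namespace RightHomotopic

variable {M}

lemma W_iff {A B : C} {u v : A ⟶ B} (h : M.RightHomotopic u v) : M.W u ↔ M.W v := by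
  obtain ⟨P, w, q, hwW, -, hd, H, hH⟩ := h
  have hfst : M.W (q ≫ prod.fst) := M.W_right_of_comp_eq_id hwW (by simp [reassoc_of% hd])
  have hsnd : M.W (q ≫ prod.snd) := M.W_right_of_comp_eq_id hwW (by simp [reassoc_of% hd])
  have hu : H ≫ q ≫ prod.fst = u := by simp [reassoc_of% hH]
  have hv : H ≫ q ≫ prod.snd = v := by simp [reassoc_of% hH]
  rw [← hu, ← hv]
  exact ⟨fun hu => M.w_comp _ _ (M.w_cancel_right _ _ hfst hu) hsnd,
    fun hv => M.w_comp _ _ (M.w_cancel_right _ _ hsnd hv) hfst⟩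

lemma comp_left {A' A B : C} {u v : A ⟶ B} (h : M.RightHomotopic u v) (a : A' ⟶ A) :
    M.RightHomotopic (a ≫ u) (a ≫ v) := by
  obtain ⟨P, w, q, hwW, hq, hd, H, hH⟩ := h
  exact ⟨P, w, q, hwW, hq, hd, a ≫ H, by simp [hH]⟩

-- The homotopy extension property of the cofibration `i`, lifting against `q ≫ prod.fst`.
lemma exists_retraction [HasTerminal C] {A Z : C} (hA : M.Fib (terminal.from A)) {i : A ⟶ Z}
    (hi : M.Cof i) {c : Z ⟶ A} (h : M.RightHomotopic (i ≫ c) (𝟙 A)) :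
    ∃ r : Z ⟶ A, i ≫ r = 𝟙 A ∧ M.RightHomotopic c r := by
  obtain ⟨P, w, q, hwW, hq, hd, H, hH⟩ := h
  have hfst : M.Fib (q ≫ prod.fst) := M.fib_comp hq (M.fib_prod_fst hA)
  have hfstW : M.W (q ≫ prod.fst) := M.W_right_of_comp_eq_id hwW (by simp [reassoc_of% hd])
  have := M.lift_trivFib i _ hi hfst hfstW
  obtain ⟨R, hiR, hR⟩ := HasLiftingProperty.exists_lift i (q ≫ prod.fst) (t := H) (b := c)
    (by simp [reassoc_of% hH])
  refine ⟨R ≫ q ≫ prod.snd, by simp [reassoc_of% hiR, reassoc_of% hH],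
    P, w, q, hwW, hq, hd, R, ?_⟩
  ext <;> simp [hR]

variable [HasInitial C]

lemma exists_cof_pathObject {A B : C} (hA : M.Cof (initial.to A)) {u v : A ⟶ B}
    (h : M.RightHomotopic u v) :
    ∃ (P : C) (w : B ⟶ P) (q : P ⟶ B ⨯ B), M.Cof w ∧ M.W w ∧ M.Fib q ∧
      w ≫ q = prod.lift (𝟙 B) (𝟙 B) ∧ ∃ H : A ⟶ P, H ≫ q = prod.lift u v := by
  obtain ⟨P, w, q, hwW, hq, hd, H, hH⟩ := h
  obtain ⟨Q, α, β, hα, hαW, hβ, rfl⟩ := M.fact₁ w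
  obtain ⟨H', hH'⟩ := M.exists_lift_of_cofibrant hA hβ (M.w_cancel_left α β hαW hwW) H
  exact ⟨Q, α, β ≫ q, hα, hαW, M.fib_comp hβ hq, by simpa using hd, H',
    by simp [reassoc_of% hH', hH]⟩

lemma comp_right {A B B' : C} (hA : M.Cof (initial.to A)) {u v : A ⟶ B}
    (h : M.RightHomotopic u v) (b : B ⟶ B') : M.RightHomotopic (u ≫ b) (v ≫ b) := by
  obtain ⟨P, w, q, hw, hwW, -, hd, H, hH⟩ := h.exists_cof_pathObject hA
  obtain ⟨P', w', q', -, hw'W, hq', hd'⟩ := M.fact₁ (prod.lift (𝟙 B') (𝟙 B'))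
  obtain ⟨K, hK⟩ := M.exists_map_pathObject hw hwW hd hq' hd' b
  exact ⟨P', w', q', hw'W, hq', hd', H ≫ K, by simp [hK, reassoc_of% hH]⟩

end RightHomotopic

lemma rightHomotopic_comp_section [HasInitial C] {Z Y : C} (hZ : M.Cof (initial.to Z))
    {p : Z ⟶ Y} (hpW : M.W p) {s : Y ⟶ Z} (hsp : s ≫ p = 𝟙 Y) :
    M.RightHomotopic (p ≫ s) (𝟙 Z) := by
  -- Without coproducts there are no cylinder objects; instead factor `s = j ≫ t` and
  -- conjugate the homotopy `(t ≫ p) ≫ j ∼ 𝟙` by a section `σ` of `t`.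
  obtain ⟨V, j, t, hj, hjW, ht, rfl⟩ := M.fact₁ s
  have htW : M.W t := M.w_cancel_left j t hjW (M.W_left_of_comp_eq_id hpW hsp)
  obtain ⟨σ, hσ⟩ := M.exists_lift_of_cofibrant hZ ht htW (𝟙 Z)
  have hV : M.RightHomotopic ((t ≫ p) ≫ j) (𝟙 V) :=
    M.rightHomotopic_retraction_comp hj hjW (by simpa using hsp)
  simpa [reassoc_of% hσ, hσ] using (hV.comp_left σ).comp_right hZ t

end PathObject

end ModelStruct

/-- **Whitehead theorem for model categories in which every object is fibrant.**
If every object of a model category is fibrant, then a morphism `f : X ⟶ Y`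
between cofibrant objects is a weak equivalence if and only if it is a homotopy
equivalence: there is `g : Y ⟶ X` with `g ∘ f` right homotopic to `𝟙 X` and
`f ∘ g` right homotopic to `𝟙 Y`. -/
theorem modelStruct_weq_iff_homotopyEquiv {C : Type u} [Category.{v} C]
    [HasInitial C] [HasTerminal C] [HasBinaryProducts C] (M : ModelStruct C)
    (allFibrant : ∀ X : C, M.Fib (terminal.from X))
    {X Y : C} (hX : M.Cof (initial.to X)) (hY : M.Cof (initial.to Y)) (f : X ⟶ Y) :
    M.W f ↔ ∃ g : Y ⟶ X,
      M.RightHomotopic (f ≫ g) (𝟙 X) ∧ M.RightHomotopic (g ≫ f) (𝟙 Y) := by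
  constructor
  · intro hf
    obtain ⟨Z, i, p, hi, hiW, hp, rfl⟩ := M.fact₁ f
    have hpW : M.W p := M.w_cancel_left i p hiW hf
    obtain ⟨r, hir⟩ := M.exists_extension_of_fibrant (allFibrant X) hi hiW (𝟙 X)
    obtain ⟨s, hsp⟩ := M.exists_lift_of_cofibrant hY hp hpW (𝟙 Y)
    have hps := M.rightHomotopic_comp_section (M.cofibrant_of_cof hX hi) hpW hsp
    have hri := M.rightHomotopic_retraction_comp hi hiW hir
    refine ⟨s ≫ r, ?_, ?_⟩
    · simpa [hir] using (hps.comp_left i).comp_right hX r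
    · simpa [hsp] using (hri.comp_left s).comp_right hY p
  · rintro ⟨g, hfg, hgf⟩
    obtain ⟨Z, i, p, hi, hp, hpW, rfl⟩ := M.fact₂ f
    obtain ⟨s, hsp⟩ := M.exists_lift_of_cofibrant hY hp hpW (𝟙 Y)
    have hgiW : M.W (g ≫ i) :=
      M.w_cancel_right _ p hpW (by simpa using hgf.W_iff.2 (M.W_id Y))
    obtain ⟨r, hir, hr⟩ := ModelStruct.RightHomotopic.exists_retraction (allFibrant X) hi
      (c := p ≫ g) (by simpa using hfg)
    have hriW : M.W (r ≫ i) := ((hr.comp_right (M.cofibrant_of_cof hX hi) i).W_iff).1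
      (by simpa using M.w_comp _ _ hpW hgiW)
    have hW : M.W ((r ≫ i) ≫ (p ≫ s)) :=
      M.w_comp _ _ hriW (M.w_comp _ _ hpW (M.W_left_of_comp_eq_id hpW hsp))
    -- `i ≫ p` is a retract of `(r ≫ i) ≫ (p ≫ s)` via `i, r` and `s, p`
    exact M.w_retract (i ≫ p) _ i r s p hir hsp (by simp [reassoc_of% hir]) (by simp [hsp]) hW
end

section
/- In a (pseudo) double category, a square α with identity vertical boundaries and horizontally invertible horizontal boundaries is weakly horizontally invertible if and only if it is vertically invertible. In particular, for a square α : (e_A, a ⇒ b, e_B) whose horizontal source a and target b are horizontal equivalences, α is an equivalence in the 2-category of vertical morphisms and squares precisely when α admits a vertical inverse. -/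
universe u

/-- A (strict) double category, given explicitly: objects, horizontal morphisms,
vertical morphisms, and squares, with strictly associative and unital horizontal
and vertical compositions of morphisms and of squares, satisfying the
interchange law and the compatibilities between identity squares.
A square `α : Sq a b u v` has horizontal source `a` (top), horizontal target `b`
(bottom), vertical source `u` (left) and vertical target `v` (right). -/
structure DoubleCat : Type (u + 1) where
  Obj : Type u
  Hor : Obj → Obj → Type u
  Ver : Obj → Obj → Type u
  Sq : ∀ {A B A' B' : Obj}, Hor A B → Hor A' B' → Ver A A' → Ver B B' → Type u
  hId : ∀ A : Obj, Hor A A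
  hComp : ∀ {A B C : Obj}, Hor A B → Hor B C → Hor A C
  hId_comp : ∀ {A B : Obj} (a : Hor A B), hComp (hId A) a = a
  hComp_id : ∀ {A B : Obj} (a : Hor A B), hComp a (hId B) = a
  hComp_assoc : ∀ {A B C D : Obj} (a : Hor A B) (b : Hor B C) (c : Hor C D),
    hComp (hComp a b) c = hComp a (hComp b c)
  vId : ∀ A : Obj, Ver A A
  vComp : ∀ {A B C : Obj}, Ver A B → Ver B C → Ver A C
  vId_comp : ∀ {A B : Obj} (u : Ver A B), vComp (vId A) u = u
  vComp_id : ∀ {A B : Obj} (u : Ver A B), vComp u (vId B) = u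
  vComp_assoc : ∀ {A B C D : Obj} (u : Ver A B) (v : Ver B C) (w : Ver C D),
    vComp (vComp u v) w = vComp u (vComp v w)
  /-- the vertical identity square `e_a` on a horizontal morphism -/
  idSqV : ∀ {A B : Obj} (a : Hor A B), Sq a a (vId A) (vId B)
  /-- the horizontal identity square `id_u` on a vertical morphism -/
  idSqH : ∀ {A A' : Obj} (u : Ver A A'), Sq (hId A) (hId A') u u
  /-- horizontal composition of squares -/
  compSqH : ∀ {A B C A' B' C' : Obj} {a : Hor A B} {b : Hor B C} {a' : Hor A' B'}
    {b' : Hor B' C'} {u : Ver A A'} {v : Ver B B'} {w : Ver C C'},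
    Sq a a' u v → Sq b b' v w → Sq (hComp a b) (hComp a' b') u w
  /-- vertical composition of squares -/
  compSqV : ∀ {A B A' B' A'' B'' : Obj} {a : Hor A B} {a' : Hor A' B'}
    {a'' : Hor A'' B''} {u : Ver A A'} {v : Ver B B'} {u' : Ver A' A''}
    {v' : Ver B' B''},
    Sq a a' u v → Sq a' a'' u' v' → Sq a a'' (vComp u u') (vComp v v')
  compSqV_id : ∀ {A B A' B' : Obj} {a : Hor A B} {a' : Hor A' B'} {u : Ver A A'}
    {v : Ver B B'} (α : Sq a a' u v), HEq (compSqV α (idSqV a')) α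
  id_compSqV : ∀ {A B A' B' : Obj} {a : Hor A B} {a' : Hor A' B'} {u : Ver A A'}
    {v : Ver B B'} (α : Sq a a' u v), HEq (compSqV (idSqV a) α) α
  compSqV_assoc : ∀ {A B A' B' A'' B'' A''' B''' : Obj} {a : Hor A B}
    {a' : Hor A' B'} {a'' : Hor A'' B''} {a''' : Hor A''' B'''}
    {u : Ver A A'} {v : Ver B B'} {u' : Ver A' A''} {v' : Ver B' B''}
    {u'' : Ver A'' A'''} {v'' : Ver B'' B'''}
    (α : Sq a a' u v) (β : Sq a' a'' u' v') (γ : Sq a'' a''' u'' v''),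
    HEq (compSqV (compSqV α β) γ) (compSqV α (compSqV β γ))
  compSqH_id : ∀ {A B A' B' : Obj} {a : Hor A B} {a' : Hor A' B'} {u : Ver A A'}
    {v : Ver B B'} (α : Sq a a' u v), HEq (compSqH α (idSqH v)) α
  id_compSqH : ∀ {A B A' B' : Obj} {a : Hor A B} {a' : Hor A' B'} {u : Ver A A'}
    {v : Ver B B'} (α : Sq a a' u v), HEq (compSqH (idSqH u) α) α
  compSqH_assoc : ∀ {A B C D A' B' C' D' : Obj} {a : Hor A B} {b : Hor B C}
    {c : Hor C D} {a' : Hor A' B'} {b' : Hor B' C'} {c' : Hor C' D'}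
    {u : Ver A A'} {v : Ver B B'} {w : Ver C C'} {x : Ver D D'}
    (α : Sq a a' u v) (β : Sq b b' v w) (γ : Sq c c' w x),
    HEq (compSqH (compSqH α β) γ) (compSqH α (compSqH β γ))
  /-- the interchange law -/
  interchange : ∀ {A B C A' B' C' A'' B'' C'' : Obj}
    {a : Hor A B} {b : Hor B C} {a' : Hor A' B'} {b' : Hor B' C'}
    {a'' : Hor A'' B''} {b'' : Hor B'' C''}
    {u : Ver A A'} {v : Ver B B'} {w : Ver C C'}
    {u' : Ver A' A''} {v' : Ver B' B''} {w' : Ver C' C''}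
    (α : Sq a a' u v) (β : Sq b b' v w) (γ : Sq a' a'' u' v') (δ : Sq b' b'' v' w'),
    compSqV (compSqH α β) (compSqH γ δ) = compSqH (compSqV α γ) (compSqV β δ)
  idSqV_hComp : ∀ {A B C : Obj} (a : Hor A B) (b : Hor B C),
    compSqH (idSqV a) (idSqV b) = idSqV (hComp a b)
  idSqH_vComp : ∀ {A A' A'' : Obj} (u : Ver A A') (u' : Ver A' A''),
    compSqV (idSqH u) (idSqH u') = idSqH (vComp u u')
  idSq_coherence : ∀ A : Obj, idSqV (hId A) = idSqH (vId A)

namespace DoubleCat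

variable {D : DoubleCat.{u}}

/-- Transport of a square along equalities of its four boundaries. -/
def sqCast {A B A' B' : D.Obj} {a₁ a₂ : D.Hor A B} {b₁ b₂ : D.Hor A' B'}
    {u₁ u₂ : D.Ver A A'} {v₁ v₂ : D.Ver B B'}
    (ha : a₁ = a₂) (hb : b₁ = b₂) (hu : u₁ = u₂) (hv : v₁ = v₂)
    (α : D.Sq a₁ b₁ u₁ v₁) : D.Sq a₂ b₂ u₂ v₂ :=
  ha ▸ hb ▸ hu ▸ hv ▸ α

theorem sqCast_heq {A B A' B' : D.Obj} {a₁ a₂ : D.Hor A B} {b₁ b₂ : D.Hor A' B'}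
    {u₁ u₂ : D.Ver A A'} {v₁ v₂ : D.Ver B B'}
    (ha : a₁ = a₂) (hb : b₁ = b₂) (hu : u₁ = u₂) (hv : v₁ = v₂)
    (α : D.Sq a₁ b₁ u₁ v₁) : HEq (sqCast ha hb hu hv α) α := by
  subst ha; subst hb; subst hu; subst hv; rfl

/-- A square with identity vertical boundaries is *vertically invertible* if it
admits an inverse for the vertical composition of squares. -/
def VerticallyInvertible {A B : D.Obj} {a b : D.Hor A B}
    (α : D.Sq a b (D.vId A) (D.vId B)) : Prop :=
  ∃ β : D.Sq b a (D.vId A) (D.vId B),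
    HEq (D.compSqV α β) (D.idSqV a) ∧ HEq (D.compSqV β α) (D.idSqV b)

/-- A horizontal morphism is a *horizontal equivalence* if it is an equivalence
in the underlying horizontal 2-category, i.e. it admits a pseudo-inverse up to
vertically invertible squares. -/
def IsHorEquiv {A B : D.Obj} (a : D.Hor A B) : Prop :=
  ∃ (a' : D.Hor B A) (η : D.Sq (D.hId A) (D.hComp a a') (D.vId A) (D.vId A))
    (ε : D.Sq (D.hComp a' a) (D.hId B) (D.vId B) (D.vId B)),
    VerticallyInvertible η ∧ VerticallyInvertible ε

/-- Horizontal adjoint equivalence data on a horizontal morphism `a : A ⟶ B`: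
a pseudo-inverse `inv`, a vertically invertible unit `η : id_A ≅ inv ∘ a` and a
vertically invertible counit `ε : a ∘ inv ≅ id_B` (written diagrammatically:
`η : Sq (hId A) (a ⬝ inv)` and `ε : Sq (inv ⬝ a) (hId B)`), satisfying the two
triangle identities. -/
structure HorAdjEquiv {A B : D.Obj} (a : D.Hor A B) : Type u where
  inv : D.Hor B A
  η : D.Sq (D.hId A) (D.hComp a inv) (D.vId A) (D.vId A)
  ε : D.Sq (D.hComp inv a) (D.hId B) (D.vId B) (D.vId B)
  η_invertible : VerticallyInvertible η
  ε_invertible : VerticallyInvertible ε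
  triangle₁ : HEq
    (D.compSqV (D.compSqH η (D.idSqV a))
      (sqCast (D.hComp_assoc a inv a).symm rfl rfl rfl
        (D.compSqH (D.idSqV a) ε)))
    (D.idSqV a)
  triangle₂ : HEq
    (D.compSqV (D.compSqH (D.idSqV inv) η)
      (sqCast (D.hComp_assoc inv a inv) rfl rfl rfl
        (D.compSqH ε (D.idSqV inv))))
    (D.idSqV inv)

/-- The two pasting equations expressing that `β` is a *weak inverse* of the
square `α : Sq a b u v` with respect to the given (co)unit squares
`η_a : id ≅ a' ∘ a`, `η_b : id ≅ b' ∘ b`, `ε_a : a ∘ a' ≅ id`, `ε_b : b ∘ b' ≅ id`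
for its horizontal boundaries: `(α ∣ β)` pasted under `η_a` agrees with `η_b`
pasted under `id_u`, and `ε_a` pasted over `id_v` agrees with `(β ∣ α)` pasted
over `ε_b`. -/
def IsWeakInverseWith {A B A' B' : D.Obj} {a : D.Hor A B} {b : D.Hor A' B'}
    {u : D.Ver A A'} {v : D.Ver B B'} (α : D.Sq a b u v)
    {a' : D.Hor B A} {b' : D.Hor B' A'}
    (η_a : D.Sq (D.hId A) (D.hComp a a') (D.vId A) (D.vId A))
    (η_b : D.Sq (D.hId A') (D.hComp b b') (D.vId A') (D.vId A'))
    (ε_a : D.Sq (D.hComp a' a) (D.hId B) (D.vId B) (D.vId B))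
    (ε_b : D.Sq (D.hComp b' b) (D.hId B') (D.vId B') (D.vId B'))
    (β : D.Sq a' b' v u) : Prop :=
  HEq (D.compSqV η_a (D.compSqH α β)) (D.compSqV (D.idSqH u) η_b) ∧
  HEq (D.compSqV ε_a (D.idSqH v)) (D.compSqV (D.compSqH β α) ε_b)

/-- A square is *weakly horizontally invertible* if it is an equivalence in the
2-category of vertical morphisms and squares: there are a square `β` in the
opposite horizontal direction and vertically invertible unit and counit squares
for the horizontal boundaries making `β` a weak inverse of `α`. -/
def WeaklyHorInvertible {A B A' B' : D.Obj} {a : D.Hor A B} {b : D.Hor A' B'}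
    {u : D.Ver A A'} {v : D.Ver B B'} (α : D.Sq a b u v) : Prop :=
  ∃ (a' : D.Hor B A) (b' : D.Hor B' A')
    (η_a : D.Sq (D.hId A) (D.hComp a a') (D.vId A) (D.vId A))
    (η_b : D.Sq (D.hId A') (D.hComp b b') (D.vId A') (D.vId A'))
    (ε_a : D.Sq (D.hComp a' a) (D.hId B) (D.vId B) (D.vId B))
    (ε_b : D.Sq (D.hComp b' b) (D.hId B') (D.vId B') (D.vId B'))
    (β : D.Sq a' b' v u),
    VerticallyInvertible η_a ∧ VerticallyInvertible η_b ∧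
    VerticallyInvertible ε_a ∧ VerticallyInvertible ε_b ∧
    IsWeakInverseWith α η_a η_b ε_a ε_b β

end DoubleCat

/-!
Globular squares (squares with identity vertical boundaries) make the objects into a bicategory,
the horizontal 2-category `𝐇(D)`, in which vertical invertibility is `IsIso`.

If `β` is a weak horizontal inverse of `α : a ⟶ b`, then
`γ := (η_a ▷ b) ≫ (a ◁ β ▷ b) ≫ (a ◁ ε_b) : b ⟶ a` (up to unitors and associators) is an inverse
of `α` up to invertible cells: the two pasting equations turn `α ≫ γ` and `γ ≫ α` into the zigzag
composites of `(η_a, ε_a)` and of `(η_b, ε_b)`, which are invertible, so `α` is invertible.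
Conversely, an invertible `α` is weakly horizontally invertible, with `β` the identity of a
pseudo-inverse `a'` of `a` and the unit and counit of `a` transported along `α` to `b`.
-/

open CategoryTheory Bicategory

theorem CategoryTheory.isIso_of_isIso_comp_of_isIso_comp {C : Type*} [Category C] {X Y : C}
    (f : X ⟶ Y) (g : Y ⟶ X) [IsIso (f ≫ g)] [IsIso (g ≫ f)] : IsIso f :=
  have : IsSplitMono f :=
    IsSplitMono.mk' ⟨g ≫ inv (f ≫ g), by rw [← Category.assoc, IsIso.hom_inv_id]⟩
  have : IsSplitEpi f := IsSplitEpi.mk' ⟨inv (g ≫ f) ≫ g, by simp⟩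
  isIso_of_mono_of_isSplitEpi f

namespace CategoryTheory.Bicategory

variable {B : Type*} [Bicategory B] {a b : B} {f g : a ⟶ b} {f' g' : b ⟶ a}

theorem isIso_of_compatible_unit_counit (α : f ⟶ g) (β : f' ⟶ g')
    (ηf : 𝟙 a ⟶ f ≫ f') (ηg : 𝟙 a ⟶ g ≫ g') (εf : f' ≫ f ⟶ 𝟙 b) (εg : g' ≫ g ⟶ 𝟙 b)
    [IsIso ηf] [IsIso ηg] [IsIso εf] [IsIso εg]
    (hη : ηf ≫ α ▷ f' ≫ g ◁ β = ηg) (hε : (β ▷ f ≫ g' ◁ α) ≫ εg = εf) : IsIso α := by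
  let γ : g ⟶ f :=
    (λ_ g).inv ≫ ηf ▷ g ≫ (α_ f f' g).hom ≫ f ◁ β ▷ g ≫ f ◁ εg ≫ (ρ_ f).hom
  have hαγ : α ≫ γ = (λ_ f).inv ≫ ηf ▷ f ≫ (α_ f f' f).hom ≫ f ◁ εf ≫ (ρ_ f).hom := by
    calc α ≫ γ = (λ_ f).inv ≫ ηf ▷ f ≫ (α_ f f' f).hom ≫ f ◁ (f' ◁ α ≫ β ▷ g) ≫ f ◁ εg ≫
          (ρ_ f).hom := by
          simp only [γ, leftUnitor_inv_naturality_assoc, whisker_exchange_assoc,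
            associator_naturality_right_assoc, whiskerLeft_comp, Category.assoc]
      _ = _ := by rw [whisker_exchange, ← hε]; simp only [whiskerLeft_comp, Category.assoc]
  have hγα : γ ≫ α = (λ_ g).inv ≫ ηg ▷ g ≫ (α_ g g' g).hom ≫ g ◁ εg ≫ (ρ_ g).hom := by
    calc γ ≫ α = (λ_ g).inv ≫ (ηf ≫ α ▷ f' ≫ g ◁ β) ▷ g ≫ (α_ g g' g).hom ≫ g ◁ εg ≫
          (ρ_ g).hom := by
          simp only [γ, Category.assoc, ← rightUnitor_naturality, whisker_exchange_assoc]
          rw [← associator_naturality_left_assoc, ← associator_naturality_middle_assoc]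
          simp only [comp_whiskerRight, Category.assoc]
      _ = _ := by rw [hη]
  have : IsIso (α ≫ γ) := by rw [hαγ]; infer_instance
  have : IsIso (γ ≫ α) := by rw [hγα]; infer_instance
  exact isIso_of_isIso_comp_of_isIso_comp α γ

end CategoryTheory.Bicategory

namespace DoubleCat

variable {D : DoubleCat.{u}}

instance horHomCategory (A B : D.Obj) : Category (D.Hor A B) where
  Hom a b := D.Sq a b (D.vId A) (D.vId B)
  id a := D.idSqV a
  comp α β := sqCast rfl rfl (D.vId_comp _) (D.vId_comp _) (D.compSqV α β)
  id_comp α := eq_of_heq ((sqCast_heq _ _ _ _ _).trans (D.id_compSqV α))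
  comp_id α := eq_of_heq ((sqCast_heq _ _ _ _ _).trans (D.compSqV_id α))
  assoc α β γ := by
    refine eq_of_heq ((sqCast_heq _ _ _ _ _).trans (HEq.trans ?_ (sqCast_heq _ _ _ _ _).symm))
    refine HEq.trans ?_ ((D.compSqV_assoc α β γ).trans ?_)
    all_goals congr 1 <;> simp only [D.vId_comp, sqCast_heq, heq_comm]

theorem comp_heq_compSqV {A B : D.Obj} {a b c : D.Hor A B} (α : a ⟶ b) (β : b ⟶ c) :
    HEq (α ≫ β) (D.compSqV α β) :=
  sqCast_heq _ _ _ _ _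

@[simp]
theorem idSqV_comp {A B : D.Obj} {a b : D.Hor A B} (α : a ⟶ b) : D.idSqV a ≫ α = α :=
  Category.id_comp α

@[simp]
theorem comp_idSqV {A B : D.Obj} {a b : D.Hor A B} (α : a ⟶ b) : α ≫ D.idSqV b = α :=
  Category.comp_id α

theorem compSqH_comp {A B C : D.Obj} {a₁ a₂ a₃ : D.Hor A B} {b₁ b₂ b₃ : D.Hor B C}
    (α : a₁ ⟶ a₂) (β : b₁ ⟶ b₂) (γ : a₂ ⟶ a₃) (δ : b₂ ⟶ b₃) :
    D.compSqH (α ≫ γ) (β ≫ δ) =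
      (D.compSqH α β ≫ D.compSqH γ δ : D.hComp a₁ b₁ ⟶ D.hComp a₃ b₃) := by
  refine eq_of_heq (HEq.trans ?_ ((heq_of_eq (D.interchange α β γ δ).symm).trans
    (comp_heq_compSqV _ _).symm))
  congr 1 <;> first | exact (D.vId_comp _).symm | exact comp_heq_compSqV _ _

theorem compSqH_eqToHom_idSqV {A B C : D.Obj} {f g : D.Hor A B} (p : f = g) (h : D.Hor B C) :
    D.compSqH (eqToHom p) (D.idSqV h) = eqToHom (congrArg (D.hComp · h) p) := by
  subst p; exact D.idSqV_hComp f h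

theorem compSqH_idSqV_eqToHom {A B C : D.Obj} (f : D.Hor A B) {g h : D.Hor B C} (p : g = h) :
    D.compSqH (D.idSqV f) (eqToHom p) = eqToHom (congrArg (D.hComp f) p) := by
  subst p; exact D.idSqV_hComp f g

instance horizontalBicategory : Bicategory D.Obj where
  Hom := D.Hor
  id := D.hId
  comp := D.hComp
  homCategory := horHomCategory
  whiskerLeft f _ _ η := D.compSqH (D.idSqV f) η
  whiskerRight η h := D.compSqH η (D.idSqV h)
  associator f g h := eqToIso (D.hComp_assoc f g h)
  leftUnitor f := eqToIso (D.hId_comp f)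
  rightUnitor f := eqToIso (D.hComp_id f)
  whiskerLeft_id f g := D.idSqV_hComp f g
  whiskerLeft_comp f _ _ _ η θ := by
    rw [← compSqH_comp, idSqV_comp]
  id_whiskerLeft η := by
    simp only [eqToIso.hom, eqToIso.inv, conj_eqToHom_iff_heq' (C := D.Hor _ _)]
    rw [D.idSq_coherence]; exact D.id_compSqH η
  comp_whiskerLeft f g _ _ η := by
    simp only [eqToIso.hom, eqToIso.inv, conj_eqToHom_iff_heq' (C := D.Hor _ _)]
    rw [← D.idSqV_hComp]; exact D.compSqH_assoc _ _ _
  id_whiskerRight f g := D.idSqV_hComp f g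
  comp_whiskerRight η θ i := by
    rw [← compSqH_comp, idSqV_comp]
  whiskerRight_id η := by
    simp only [eqToIso.hom, eqToIso.inv, conj_eqToHom_iff_heq' (C := D.Hor _ _)]
    rw [D.idSq_coherence]; exact D.compSqH_id η
  whiskerRight_comp η g h := by
    simp only [eqToIso.hom, eqToIso.inv, conj_eqToHom_iff_heq' (C := D.Hor _ _)]
    rw [← D.idSqV_hComp]; exact (D.compSqH_assoc _ _ _).symm
  whisker_assoc f _ _ η h := by
    simp only [eqToIso.hom, eqToIso.inv, conj_eqToHom_iff_heq' (C := D.Hor _ _)]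
    exact D.compSqH_assoc _ _ _
  whisker_exchange η θ := by
    rw [← compSqH_comp, ← compSqH_comp, idSqV_comp, comp_idSqV, idSqV_comp, comp_idSqV]
  pentagon f g h i := by
    simp only [eqToIso.hom, compSqH_eqToHom_idSqV, compSqH_idSqV_eqToHom, eqToHom_trans]
  triangle f g := by
    simp only [eqToIso.hom, compSqH_eqToHom_idSqV, compSqH_idSqV_eqToHom, eqToHom_trans]

theorem verticallyInvertible_iff_isIso {A B : D.Obj} {a b : A ⟶ B} (α : a ⟶ b) :
    VerticallyInvertible α ↔ IsIso α := by
  constructor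
  · rintro ⟨β, hαβ, hβα⟩
    exact ⟨β, eq_of_heq ((comp_heq_compSqV α β).trans hαβ),
      eq_of_heq ((comp_heq_compSqV β α).trans hβα)⟩
  · intro
    exact ⟨inv α, (comp_heq_compSqV _ _).symm.trans (heq_of_eq (IsIso.hom_inv_id α)),
      (comp_heq_compSqV _ _).symm.trans (heq_of_eq (IsIso.inv_hom_id α))⟩

theorem compSqH_eq_whiskerRight_comp_whiskerLeft {A B C : D.Obj} {a a' : A ⟶ B} {b b' : B ⟶ C}
    (α : a ⟶ a') (β : b ⟶ b') : D.compSqH α β = α ▷ b ≫ a' ◁ β := by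
  calc D.compSqH α β = D.compSqH (α ≫ D.idSqV a') (D.idSqV b ≫ β) := by
        rw [comp_idSqV, idSqV_comp]
    _ = α ▷ b ≫ a' ◁ β := compSqH_comp _ _ _ _

theorem isWeakInverseWith_iff {A B : D.Obj} {a b : A ⟶ B} {a' b' : B ⟶ A} (α : a ⟶ b) (β : a' ⟶ b')
    (η_a : 𝟙 A ⟶ a ≫ a') (η_b : 𝟙 A ⟶ b ≫ b') (ε_a : a' ≫ a ⟶ 𝟙 B) (ε_b : b' ≫ b ⟶ 𝟙 B) :
    IsWeakInverseWith α η_a η_b ε_a ε_b β ↔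
      η_a ≫ α ▷ a' ≫ b ◁ β = η_b ∧ (β ▷ a ≫ b' ◁ α) ≫ ε_b = ε_a := by
  have hη_b : HEq (D.compSqV (D.idSqH (D.vId A)) η_b) η_b := by
    rw [← D.idSq_coherence]; exact D.id_compSqV η_b
  have hε_a : HEq (D.compSqV ε_a (D.idSqH (D.vId B))) ε_a := by
    rw [← D.idSq_coherence]; exact D.compSqV_id ε_a
  have hη_a := comp_heq_compSqV η_a (D.compSqH α β)
  have hε_b := comp_heq_compSqV (D.compSqH β α) ε_b
  rw [← compSqH_eq_whiskerRight_comp_whiskerLeft, ← compSqH_eq_whiskerRight_comp_whiskerLeft]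
  constructor
  · rintro ⟨w₁, w₂⟩
    exact ⟨eq_of_heq (hη_a.trans (w₁.trans hη_b)), eq_of_heq (hε_b.trans (w₂.symm.trans hε_a))⟩
  · rintro ⟨e₁, e₂⟩
    exact ⟨hη_a.symm.trans ((heq_of_eq e₁).trans hη_b.symm),
      hε_a.trans ((heq_of_eq e₂).symm.trans hε_b)⟩

theorem weaklyHorInvertible_of_isIso {A B : D.Obj} {a b : A ⟶ B} {a' : B ⟶ A}
    (unit : 𝟙 A ⟶ a ≫ a') (counit : a' ≫ a ⟶ 𝟙 B) [IsIso unit] [IsIso counit]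
    (α : a ⟶ b) [IsIso α] : WeaklyHorInvertible α := by
  refine ⟨a', a', unit, unit ≫ α ▷ a', counit, a' ◁ inv α ≫ counit, 𝟙 a', ?_, ?_, ?_, ?_,
    (isWeakInverseWith_iff _ _ _ _ _ _).2 ⟨by simp, by simp⟩⟩
  all_goals exact (verticallyInvertible_iff_isIso _).2 inferInstance

theorem isIso_of_weaklyHorInvertible {A B : D.Obj} {a b : A ⟶ B} {α : a ⟶ b}
    (h : WeaklyHorInvertible α) : IsIso α := by
  obtain ⟨a', b', η_a, η_b, ε_a, ε_b, β, hη_a, hη_b, hε_a, hε_b, hβ⟩ := h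
  simp only [verticallyInvertible_iff_isIso] at hη_a hη_b hε_a hε_b
  obtain ⟨hη, hε⟩ := (isWeakInverseWith_iff α β η_a η_b ε_a ε_b).1 hβ
  exact isIso_of_compatible_unit_counit α β η_a η_b ε_a ε_b hη hε

theorem weaklyHorInvertible_iff_verticallyInvertible_general {D : DoubleCat.{u}}
    {A B : D.Obj} {a b : D.Hor A B} (ha : IsHorEquiv a)
    (α : D.Sq a b (D.vId A) (D.vId B)) :
    WeaklyHorInvertible α ↔ VerticallyInvertible α := by
  rw [verticallyInvertible_iff_isIso]
  refine ⟨isIso_of_weaklyHorInvertible, fun _ => ?_⟩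
  obtain ⟨a', unit, counit, hunit, hcounit⟩ := ha
  rw [verticallyInvertible_iff_isIso] at hunit hcounit
  exact weaklyHorInvertible_of_isIso unit counit α

/-- **In a double category, a square with identity vertical boundaries whose
horizontal boundaries are horizontal equivalences is weakly horizontally
invertible (an equivalence in the 2-category of vertical morphisms and squares)
if and only if it is vertically invertible.** -/
theorem weaklyHorInvertible_iff_verticallyInvertible {D : DoubleCat.{u}}
    {A B : D.Obj} {a b : D.Hor A B} (ha : IsHorEquiv a) (hb : IsHorEquiv b)
    (α : D.Sq a b (D.vId A) (D.vId B)) :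
    WeaklyHorInvertible α ↔ VerticallyInvertible α :=
  weaklyHorInvertible_iff_verticallyInvertible_general ha α

end DoubleCat
end

section
/- A double functor F : 𝔸 ⟶ 𝔹 is simultaneously a double biequivalence and a double fibration if and only if it is a double trivial fibration, i.e. F is surjective on objects, full on horizontal morphisms (between objects in the image), surjective on vertical morphisms, and fully faithful on squares (with fixed boundaries in the image of F). -/
universe u

namespace DoubleCat

/-- A (strict) double functor between double categories: maps on objects,
horizontal morphisms, vertical morphisms and squares, strictly preserving all
identities and compositions. -/
structure DoubleFunctor (C D : DoubleCat.{u}) : Type u where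
  obj : C.Obj → D.Obj
  hor : ∀ {A B : C.Obj}, C.Hor A B → D.Hor (obj A) (obj B)
  ver : ∀ {A B : C.Obj}, C.Ver A B → D.Ver (obj A) (obj B)
  sq : ∀ {A B A' B' : C.Obj} {a : C.Hor A B} {b : C.Hor A' B'} {u : C.Ver A A'}
    {v : C.Ver B B'}, C.Sq a b u v → D.Sq (hor a) (hor b) (ver u) (ver v)
  hor_id : ∀ A : C.Obj, hor (C.hId A) = D.hId (obj A)
  hor_comp : ∀ {A B E : C.Obj} (a : C.Hor A B) (b : C.Hor B E),
    hor (C.hComp a b) = D.hComp (hor a) (hor b)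
  ver_id : ∀ A : C.Obj, ver (C.vId A) = D.vId (obj A)
  ver_comp : ∀ {A B E : C.Obj} (u : C.Ver A B) (v : C.Ver B E),
    ver (C.vComp u v) = D.vComp (ver u) (ver v)
  sq_idV : ∀ {A B : C.Obj} (a : C.Hor A B), HEq (sq (C.idSqV a)) (D.idSqV (hor a))
  sq_idH : ∀ {A A' : C.Obj} (u : C.Ver A A'), HEq (sq (C.idSqH u)) (D.idSqH (ver u))
  sq_compH : ∀ {A B E A' B' E' : C.Obj} {a : C.Hor A B} {b : C.Hor B E}
    {a' : C.Hor A' B'} {b' : C.Hor B' E'} {u : C.Ver A A'} {v : C.Ver B B'}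
    {w : C.Ver E E'} (α : C.Sq a a' u v) (β : C.Sq b b' v w),
    HEq (sq (C.compSqH α β)) (D.compSqH (sq α) (sq β))
  sq_compV : ∀ {A B A' B' A'' B'' : C.Obj} {a : C.Hor A B} {a' : C.Hor A' B'}
    {a'' : C.Hor A'' B''} {u : C.Ver A A'} {v : C.Ver B B'} {u' : C.Ver A' A''}
    {v' : C.Ver B' B''} (α : C.Sq a a' u v) (β : C.Sq a' a'' u' v'),
    HEq (sq (C.compSqV α β)) (D.compSqV (sq α) (sq β))

/-- A double functor maps heterogeneously equal squares (over equal boundaries)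
to heterogeneously equal squares. -/
theorem DoubleFunctor.sq_congr {C D : DoubleCat.{u}} (G : DoubleFunctor C D)
    {A B A' B' : C.Obj} {a₁ a₂ : C.Hor A B} {b₁ b₂ : C.Hor A' B'}
    {u₁ u₂ : C.Ver A A'} {v₁ v₂ : C.Ver B B'}
    (ha : a₁ = a₂) (hb : b₁ = b₂) (hu : u₁ = u₂) (hv : v₁ = v₂)
    {α : C.Sq a₁ b₁ u₁ v₁} {β : C.Sq a₂ b₂ u₂ v₂} (h : HEq α β) :
    HEq (G.sq α) (G.sq β) := by
  subst ha; subst hb; subst hu; subst hv; rw [eq_of_heq h]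

/-- The identity double functor. -/
def DoubleFunctor.id (C : DoubleCat.{u}) : DoubleFunctor C C where
  obj A := A
  hor a := a
  ver u := u
  sq α := α
  hor_id _ := rfl
  hor_comp _ _ := rfl
  ver_id _ := rfl
  ver_comp _ _ := rfl
  sq_idV _ := HEq.rfl
  sq_idH _ := HEq.rfl
  sq_compH _ _ := HEq.rfl
  sq_compV _ _ := HEq.rfl

/-- Composition of double functors (diagrammatic order: `F` then `G`). -/
def DoubleFunctor.comp {B C D : DoubleCat.{u}} (F : DoubleFunctor B C)
    (G : DoubleFunctor C D) : DoubleFunctor B D where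
  obj A := G.obj (F.obj A)
  hor a := G.hor (F.hor a)
  ver u := G.ver (F.ver u)
  sq α := G.sq (F.sq α)
  hor_id A := by
    show G.hor (F.hor (B.hId A)) = D.hId (G.obj (F.obj A))
    rw [F.hor_id, G.hor_id]
  hor_comp a b := by
    show G.hor (F.hor (B.hComp a b)) = D.hComp (G.hor (F.hor a)) (G.hor (F.hor b))
    rw [F.hor_comp, G.hor_comp]
  ver_id A := by
    show G.ver (F.ver (B.vId A)) = D.vId (G.obj (F.obj A))
    rw [F.ver_id, G.ver_id]
  ver_comp u v := by
    show G.ver (F.ver (B.vComp u v)) = D.vComp (G.ver (F.ver u)) (G.ver (F.ver v))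
    rw [F.ver_comp, G.ver_comp]
  sq_idV a :=
    (G.sq_congr rfl rfl (F.ver_id _) (F.ver_id _) (F.sq_idV a)).trans
      (G.sq_idV (F.hor a))
  sq_idH u :=
    (G.sq_congr (F.hor_id _) (F.hor_id _) rfl rfl (F.sq_idH u)).trans
      (G.sq_idH (F.ver u))
  sq_compH α β :=
    (G.sq_congr (F.hor_comp _ _) (F.hor_comp _ _) rfl rfl (F.sq_compH α β)).trans
      (G.sq_compH (F.sq α) (F.sq β))
  sq_compV α β :=
    (G.sq_congr rfl rfl (F.ver_comp _ _) (F.ver_comp _ _) (F.sq_compV α β)).trans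
      (G.sq_compV (F.sq α) (F.sq β))

end DoubleCat

namespace DoubleCat

/-- A double functor is a **double biequivalence** if it is
(db1) surjective on objects up to horizontal equivalence,
(db2) full on horizontal morphisms up to vertically invertible square,
(db3) surjective on vertical morphisms up to weakly horizontally invertible
square, and (db4) fully faithful on squares. -/
def DoubleFunctor.IsDoubleBiequiv {C D : DoubleCat.{u}} (F : DoubleFunctor C D) :
    Prop :=
  (∀ B : D.Obj, ∃ (A : C.Obj) (e : D.Hor B (F.obj A)), IsHorEquiv e) ∧
  (∀ (A E : C.Obj) (b : D.Hor (F.obj A) (F.obj E)),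
    ∃ (a : C.Hor A E) (σ : D.Sq b (F.hor a) (D.vId (F.obj A)) (D.vId (F.obj E))),
      VerticallyInvertible σ) ∧
  (∀ (B B' : D.Obj) (v : D.Ver B B'),
    ∃ (A A' : C.Obj) (u : C.Ver A A') (e : D.Hor B (F.obj A))
      (e' : D.Hor B' (F.obj A')) (σ : D.Sq e e' v (F.ver u)),
      WeaklyHorInvertible σ) ∧
  (∀ (A E A' E' : C.Obj) (a : C.Hor A E) (c : C.Hor A' E') (u : C.Ver A A')
    (u' : C.Ver E E') (β : D.Sq (F.hor a) (F.hor c) (F.ver u) (F.ver u')),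
    ∃! α : C.Sq a c u u', F.sq α = β)

/-- A double functor is a **double fibration** if
(df1) horizontal equivalences with codomain in the image lift,
(df2) vertically invertible squares whose bottom boundary is in the image lift,
and (df3) weakly horizontally invertible squares whose right vertical boundary
is in the image lift. -/
def DoubleFunctor.IsDoubleFibration {C D : DoubleCat.{u}} (F : DoubleFunctor C D) :
    Prop :=
  (∀ (E : C.Obj) (B : D.Obj) (b : D.Hor B (F.obj E)), IsHorEquiv b →
    ∃ (A : C.Obj) (a : C.Hor A E), IsHorEquiv a ∧
      ∃ _ : F.obj A = B, HEq (F.hor a) b) ∧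
  (∀ (A E : C.Obj) (c : C.Hor A E) (b : D.Hor (F.obj A) (F.obj E))
    (β : D.Sq b (F.hor c) (D.vId (F.obj A)) (D.vId (F.obj E))),
    VerticallyInvertible β →
    ∃ (a : C.Hor A E) (α : C.Sq a c (C.vId A) (C.vId E)),
      VerticallyInvertible α ∧ F.hor a = b ∧ HEq (F.sq α) β) ∧
  (∀ (E E' : C.Obj) (u' : C.Ver E E') (B B' : D.Obj) (v : D.Ver B B')
    (e : D.Hor B (F.obj E)) (e' : D.Hor B' (F.obj E'))
    (β : D.Sq e e' v (F.ver u')), WeaklyHorInvertible β →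
    ∃ (A A' : C.Obj) (u : C.Ver A A') (f : C.Hor A E) (f' : C.Hor A' E')
      (α : C.Sq f f' u u'), WeaklyHorInvertible α ∧
      ∃ (_ : F.obj A = B) (_ : F.obj A' = B'),
        HEq (F.ver u) v ∧ HEq (F.hor f) e ∧ HEq (F.hor f') e' ∧ HEq (F.sq α) β)

/-- A double functor is a **double trivial fibration** if it is
(dt1) surjective on objects, (dt2) full on horizontal morphisms between objects
in the image, (dt3) surjective on vertical morphisms, and (dt4) fully faithful
on squares. -/
def DoubleFunctor.IsDoubleTrivFibration {C D : DoubleCat.{u}}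
    (F : DoubleFunctor C D) : Prop :=
  (∀ B : D.Obj, ∃ A : C.Obj, F.obj A = B) ∧
  (∀ (A E : C.Obj) (b : D.Hor (F.obj A) (F.obj E)),
    ∃ a : C.Hor A E, F.hor a = b) ∧
  (∀ (B B' : D.Obj) (v : D.Ver B B'),
    ∃ (A A' : C.Obj) (u : C.Ver A A') (_ : F.obj A = B) (_ : F.obj A' = B'),
      HEq (F.ver u) v) ∧
  (∀ (A E A' E' : C.Obj) (a : C.Hor A E) (c : C.Hor A' E') (u : C.Ver A A')
    (u' : C.Ver E E') (β : D.Sq (F.hor a) (F.hor c) (F.ver u) (F.ver u')),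
    ∃! α : C.Sq a c u u', F.sq α = β)

end DoubleCat

/-!
The forward direction is immediate: (df1)–(df3), applied to the witnesses provided by
(db1)–(db3), produce strict preimages. Conversely, since a double trivial fibration is full on
horizontal morphisms and fully faithful on squares, the inverses, units and counits witnessing
an equivalence between data in the image of `F` lift, and the pasting equations they satisfy
lift by faithfulness. So `F` reflects vertically invertible squares, horizontal equivalences
and weakly horizontally invertible squares; identities then witness (db1)–(db3), and exact
preimages witness (df1)–(df3).
-/

namespace DoubleCat

section

variable {D : DoubleCat.{u}}

theorem compSqV_congr {A B A' B' A'' B'' : D.Obj}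
    {a₁ a₂ : D.Hor A B} {m₁ m₂ : D.Hor A' B'} {c₁ c₂ : D.Hor A'' B''}
    {u₁ u₂ : D.Ver A A'} {v₁ v₂ : D.Ver B B'}
    {u'₁ u'₂ : D.Ver A' A''} {v'₁ v'₂ : D.Ver B' B''}
    (ha : a₁ = a₂) (hm : m₁ = m₂) (hc : c₁ = c₂) (hu : u₁ = u₂) (hv : v₁ = v₂)
    (hu' : u'₁ = u'₂) (hv' : v'₁ = v'₂)
    {α₁ : D.Sq a₁ m₁ u₁ v₁} {α₂ : D.Sq a₂ m₂ u₂ v₂}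
    {β₁ : D.Sq m₁ c₁ u'₁ v'₁} {β₂ : D.Sq m₂ c₂ u'₂ v'₂}
    (hα : HEq α₁ α₂) (hβ : HEq β₁ β₂) :
    HEq (D.compSqV α₁ β₁) (D.compSqV α₂ β₂) := by
  subst ha hm hc hu hv hu' hv'
  rw [eq_of_heq hα, eq_of_heq hβ]

theorem compSqV_heq_idSqH {A A' A'' : D.Obj} {x : D.Hor A A} {y : D.Hor A' A'}
    {z : D.Hor A'' A''} {u : D.Ver A A'} {u' : D.Ver A' A''} {w : D.Ver A A''}
    {s : D.Sq x y u u} {t : D.Sq y z u' u'}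
    (hx : x = D.hId A) (hy : y = D.hId A') (hz : z = D.hId A'') (hw : D.vComp u u' = w)
    (hs : HEq s (D.idSqH u)) (ht : HEq t (D.idSqH u')) :
    HEq (D.compSqV s t) (D.idSqH w) := by
  subst hx hy hz hw
  rw [eq_of_heq hs, eq_of_heq ht, D.idSqH_vComp]

theorem VerticallyInvertible.of_heq {A B : D.Obj} {a₁ a₂ b₁ b₂ : D.Hor A B}
    (ha : a₁ = a₂) (hb : b₁ = b₂)
    {α : D.Sq a₁ b₁ (D.vId A) (D.vId B)} {β : D.Sq a₂ b₂ (D.vId A) (D.vId B)}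
    (h : HEq α β) (hα : VerticallyInvertible α) : VerticallyInvertible β := by
  subst ha hb
  rwa [← eq_of_heq h]

theorem verticallyInvertible_idSqV {A B : D.Obj} (a : D.Hor A B) :
    VerticallyInvertible (D.idSqV a) :=
  ⟨D.idSqV a, D.compSqV_id _, D.compSqV_id _⟩

def hIdUnit (A : D.Obj) :
    D.Sq (D.hId A) (D.hComp (D.hId A) (D.hId A)) (D.vId A) (D.vId A) :=
  sqCast rfl (D.hComp_id _).symm rfl rfl (D.idSqV (D.hId A))

def hIdCounit (A : D.Obj) :
    D.Sq (D.hComp (D.hId A) (D.hId A)) (D.hId A) (D.vId A) (D.vId A) :=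
  sqCast (D.hComp_id _).symm rfl rfl rfl (D.idSqV (D.hId A))

theorem hIdUnit_heq (A : D.Obj) : HEq (D.hIdUnit A) (D.idSqH (D.vId A)) :=
  (sqCast_heq _ _ _ _ _).trans (heq_of_eq (D.idSq_coherence A))

theorem hIdCounit_heq (A : D.Obj) : HEq (D.hIdCounit A) (D.idSqH (D.vId A)) :=
  (sqCast_heq _ _ _ _ _).trans (heq_of_eq (D.idSq_coherence A))

theorem verticallyInvertible_hIdUnit (A : D.Obj) : VerticallyInvertible (D.hIdUnit A) :=
  (verticallyInvertible_idSqV _).of_heq rfl (D.hComp_id _).symm (sqCast_heq _ _ _ _ _).symm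

theorem verticallyInvertible_hIdCounit (A : D.Obj) :
    VerticallyInvertible (D.hIdCounit A) :=
  (verticallyInvertible_idSqV _).of_heq (D.hComp_id _).symm rfl (sqCast_heq _ _ _ _ _).symm

theorem isHorEquiv_hId (A : D.Obj) : IsHorEquiv (D.hId A) :=
  ⟨D.hId A, D.hIdUnit A, D.hIdCounit A, D.verticallyInvertible_hIdUnit A,
    D.verticallyInvertible_hIdCounit A⟩

theorem weaklyHorInvertible_idSqH {A A' : D.Obj} (u : D.Ver A A') :
    WeaklyHorInvertible (D.idSqH u) := by
  refine ⟨D.hId A, D.hId A', D.hIdUnit A, D.hIdUnit A', D.hIdCounit A, D.hIdCounit A',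
    D.idSqH u, D.verticallyInvertible_hIdUnit A, D.verticallyInvertible_hIdUnit A',
    D.verticallyInvertible_hIdCounit A, D.verticallyInvertible_hIdCounit A', ?unit, ?counit⟩
  case unit =>
    have hL := compSqV_heq_idSqH rfl (D.hComp_id _) (D.hComp_id _) (D.vId_comp u)
      (D.hIdUnit_heq A) (D.id_compSqH (D.idSqH u))
    have hR := compSqV_heq_idSqH rfl rfl (D.hComp_id _) (D.vComp_id u)
      (HEq.refl (D.idSqH u)) (D.hIdUnit_heq A')
    exact hL.trans hR.symm
  case counit =>
    have hL := compSqV_heq_idSqH (D.hComp_id _) rfl rfl (D.vId_comp u)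
      (D.hIdCounit_heq A) (HEq.refl (D.idSqH u))
    have hR := compSqV_heq_idSqH (D.hComp_id _) (D.hComp_id _) rfl (D.vComp_id u)
      (D.id_compSqH (D.idSqH u)) (D.hIdCounit_heq A')
    exact hL.trans hR.symm

end

end DoubleCat

namespace DoubleCat

variable {C D : DoubleCat.{u}}

def DoubleFunctor.FullOnHor (F : DoubleFunctor C D) : Prop :=
  ∀ (A E : C.Obj) (b : D.Hor (F.obj A) (F.obj E)), ∃ a : C.Hor A E, F.hor a = b

def DoubleFunctor.FullyFaithfulOnSq (F : DoubleFunctor C D) : Prop :=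
  ∀ (A E A' E' : C.Obj) (a : C.Hor A E) (c : C.Hor A' E') (u : C.Ver A A')
    (u' : C.Ver E E') (β : D.Sq (F.hor a) (F.hor c) (F.ver u) (F.ver u')),
    ∃! α : C.Sq a c u u', F.sq α = β

namespace DoubleFunctor.FullyFaithfulOnSq

variable {F : DoubleFunctor C D} (hF : F.FullyFaithfulOnSq)
include hF

theorem exists_sq_heq {A E A' E' : C.Obj} {a : C.Hor A E} {c : C.Hor A' E'}
    {u : C.Ver A A'} {u' : C.Ver E E'} {p : D.Hor (F.obj A) (F.obj E)}
    {q : D.Hor (F.obj A') (F.obj E')} {r : D.Ver (F.obj A) (F.obj A')}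
    {s : D.Ver (F.obj E) (F.obj E')}
    (hp : F.hor a = p) (hq : F.hor c = q) (hr : F.ver u = r) (hs : F.ver u' = s)
    (β : D.Sq p q r s) : ∃ α : C.Sq a c u u', HEq (F.sq α) β := by
  subst hp hq hr hs
  obtain ⟨α, hα, -⟩ := hF _ _ _ _ a c u u' β
  exact ⟨α, heq_of_eq hα⟩

theorem heq_of_map_heq {A E A' E' : C.Obj} {a₁ a₂ : C.Hor A E} {c₁ c₂ : C.Hor A' E'}
    {u₁ u₂ : C.Ver A A'} {w₁ w₂ : C.Ver E E'}
    (ha : a₁ = a₂) (hc : c₁ = c₂) (hu : u₁ = u₂) (hw : w₁ = w₂)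
    {α₁ : C.Sq a₁ c₁ u₁ w₁} {α₂ : C.Sq a₂ c₂ u₂ w₂}
    (h : HEq (F.sq α₁) (F.sq α₂)) : HEq α₁ α₂ := by
  subst ha hc hu hw
  obtain ⟨α, -, huniq⟩ := hF _ _ _ _ a₁ c₁ u₁ w₁ (F.sq α₂)
  rw [huniq α₁ (eq_of_heq h), huniq α₂ rfl]

theorem verticallyInvertible_of_map {A E : C.Obj} {a c : C.Hor A E}
    {α : C.Sq a c (C.vId A) (C.vId E)} {p q : D.Hor (F.obj A) (F.obj E)}
    (hp : F.hor a = p) (hq : F.hor c = q)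
    {β : D.Sq p q (D.vId (F.obj A)) (D.vId (F.obj E))}
    (hαβ : HEq (F.sq α) β) (hβ : VerticallyInvertible β) : VerticallyInvertible α := by
  subst hp hq
  obtain ⟨β', hββ', hβ'β⟩ := hβ
  obtain ⟨α', hα'β'⟩ := hF.exists_sq_heq rfl rfl (F.ver_id A) (F.ver_id E) β'
  refine ⟨α', ?_, ?_⟩
  · refine hF.heq_of_map_heq rfl rfl (C.vId_comp _) (C.vId_comp _) ?_
    refine (F.sq_compV α α').trans (HEq.trans ?_ (F.sq_idV a).symm)
    exact (compSqV_congr rfl rfl rfl (F.ver_id A) (F.ver_id E) (F.ver_id A) (F.ver_id E)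
      hαβ hα'β').trans hββ'
  · refine hF.heq_of_map_heq rfl rfl (C.vId_comp _) (C.vId_comp _) ?_
    refine (F.sq_compV α' α).trans (HEq.trans ?_ (F.sq_idV c).symm)
    exact (compSqV_congr rfl rfl rfl (F.ver_id A) (F.ver_id E) (F.ver_id A) (F.ver_id E)
      hα'β' hαβ).trans hβ'β

theorem exists_verticallyInvertible_lift {A E : C.Obj} {a c : C.Hor A E}
    {p q : D.Hor (F.obj A) (F.obj E)} (hp : F.hor a = p) (hq : F.hor c = q)
    {β : D.Sq p q (D.vId (F.obj A)) (D.vId (F.obj E))} (hβ : VerticallyInvertible β) :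
    ∃ α : C.Sq a c (C.vId A) (C.vId E), VerticallyInvertible α ∧ HEq (F.sq α) β := by
  obtain ⟨α, hαβ⟩ := hF.exists_sq_heq hp hq (F.ver_id A) (F.ver_id E) β
  exact ⟨α, hF.verticallyInvertible_of_map hp hq hαβ hβ, hαβ⟩

theorem isHorEquiv_of_map (hH : F.FullOnHor) {A E : C.Obj} {a : C.Hor A E}
    (h : IsHorEquiv (F.hor a)) : IsHorEquiv a := by
  obtain ⟨b, η, ε, hη, hε⟩ := h
  obtain ⟨a', rfl⟩ := hH E A b
  obtain ⟨ηC, hηC, -⟩ := hF.exists_verticallyInvertible_lift (F.hor_id A) (F.hor_comp a a') hη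
  obtain ⟨εC, hεC, -⟩ := hF.exists_verticallyInvertible_lift (F.hor_comp a' a) (F.hor_id E) hε
  exact ⟨a', ηC, εC, hηC, hεC⟩

theorem isWeakInverseWith_of_map {A E A' E' : C.Obj} {f : C.Hor A E} {f' : C.Hor A' E'}
    {g : C.Hor E A} {g' : C.Hor E' A'} {u : C.Ver A A'} {u' : C.Ver E E'}
    {α : C.Sq f f' u u'} {δ : C.Sq g g' u' u}
    {η : C.Sq (C.hId A) (C.hComp f g) (C.vId A) (C.vId A)}
    {η' : C.Sq (C.hId A') (C.hComp f' g') (C.vId A') (C.vId A')}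
    {ε : C.Sq (C.hComp g f) (C.hId E) (C.vId E) (C.vId E)}
    {ε' : C.Sq (C.hComp g' f') (C.hId E') (C.vId E') (C.vId E')}
    {ηD : D.Sq (D.hId (F.obj A)) (D.hComp (F.hor f) (F.hor g)) (D.vId _) (D.vId _)}
    {ηD' : D.Sq (D.hId (F.obj A')) (D.hComp (F.hor f') (F.hor g')) (D.vId _) (D.vId _)}
    {εD : D.Sq (D.hComp (F.hor g) (F.hor f)) (D.hId (F.obj E)) (D.vId _) (D.vId _)}
    {εD' : D.Sq (D.hComp (F.hor g') (F.hor f')) (D.hId (F.obj E')) (D.vId _) (D.vId _)}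
    (hη : HEq (F.sq η) ηD) (hη' : HEq (F.sq η') ηD') (hε : HEq (F.sq ε) εD)
    (hε' : HEq (F.sq ε') εD') (h : IsWeakInverseWith (F.sq α) ηD ηD' εD εD' (F.sq δ)) :
    IsWeakInverseWith α η η' ε ε' δ := by
  obtain ⟨hunit, hcounit⟩ := h
  constructor
  · refine hF.heq_of_map_heq rfl rfl (by rw [C.vId_comp, C.vComp_id])
      (by rw [C.vId_comp, C.vComp_id]) ?_
    have hL := (F.sq_compV η (C.compSqH α δ)).trans
      (compSqV_congr (F.hor_id A) (F.hor_comp f g) (F.hor_comp f' g') (F.ver_id A)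
        (F.ver_id A) rfl rfl hη (F.sq_compH α δ))
    have hR := (F.sq_compV (C.idSqH u) η').trans
      (compSqV_congr (F.hor_id A) (F.hor_id A') (F.hor_comp f' g') rfl rfl (F.ver_id A')
        (F.ver_id A') (F.sq_idH u) hη')
    exact (hL.trans hunit).trans hR.symm
  · refine hF.heq_of_map_heq rfl rfl (by rw [C.vId_comp, C.vComp_id])
      (by rw [C.vId_comp, C.vComp_id]) ?_
    have hL := (F.sq_compV ε (C.idSqH u')).trans
      (compSqV_congr (F.hor_comp g f) (F.hor_id E) (F.hor_id E') (F.ver_id E) (F.ver_id E)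
        rfl rfl hε (F.sq_idH u'))
    have hR := (F.sq_compV (C.compSqH δ α) ε').trans
      (compSqV_congr (F.hor_comp g f) (F.hor_comp g' f') (F.hor_id E') rfl rfl
        (F.ver_id E') (F.ver_id E') (F.sq_compH δ α) hε')
    exact (hL.trans hcounit).trans hR.symm

theorem weaklyHorInvertible_of_map (hH : F.FullOnHor) {A E A' E' : C.Obj}
    {f : C.Hor A E} {f' : C.Hor A' E'} {u : C.Ver A A'} {u' : C.Ver E E'}
    {α : C.Sq f f' u u'} (h : WeaklyHorInvertible (F.sq α)) : WeaklyHorInvertible α := by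
  obtain ⟨b, b', ηD, ηD', εD, εD', β, hηD, hηD', hεD, hεD', hinv⟩ := h
  obtain ⟨g, rfl⟩ := hH E A b
  obtain ⟨g', rfl⟩ := hH E' A' b'
  obtain ⟨δ, rfl, -⟩ := hF _ _ _ _ g g' u' u β
  obtain ⟨η, hη, hFη⟩ := hF.exists_verticallyInvertible_lift (F.hor_id A) (F.hor_comp f g) hηD
  obtain ⟨η', hη', hFη'⟩ :=
    hF.exists_verticallyInvertible_lift (F.hor_id A') (F.hor_comp f' g') hηD'
  obtain ⟨ε, hε, hFε⟩ := hF.exists_verticallyInvertible_lift (F.hor_comp g f) (F.hor_id E) hεD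
  obtain ⟨ε', hε', hFε'⟩ :=
    hF.exists_verticallyInvertible_lift (F.hor_comp g' f') (F.hor_id E') hεD'
  exact ⟨g, g', η, η', ε, ε', δ, hη, hη', hε, hε',
    hF.isWeakInverseWith_of_map hFη hFη' hFε hFε' hinv⟩

end DoubleFunctor.FullyFaithfulOnSq

end DoubleCat

namespace DoubleCat

section

variable {C D : DoubleCat.{u}} {F : DoubleFunctor C D}

theorem DoubleFunctor.IsDoubleBiequiv.isDoubleTrivFibration (hB : F.IsDoubleBiequiv)
    (hF : F.IsDoubleFibration) : F.IsDoubleTrivFibration := by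
  obtain ⟨db1, db2, db3, db4⟩ := hB
  obtain ⟨df1, df2, df3⟩ := hF
  refine ⟨fun B ↦ ?_, fun A E b ↦ ?_, fun B B' v ↦ ?_, db4⟩
  · obtain ⟨A, e, he⟩ := db1 B
    obtain ⟨A₀, -, -, hA₀, -⟩ := df1 A B e he
    exact ⟨A₀, hA₀⟩
  · obtain ⟨a, σ, hσ⟩ := db2 A E b
    obtain ⟨a₀, -, -, ha₀, -⟩ := df2 A E a b σ hσ
    exact ⟨a₀, ha₀⟩
  · obtain ⟨A, A', u, e, e', σ, hσ⟩ := db3 B B' v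
    obtain ⟨A₀, A₀', u₀, -, -, -, -, hA₀, hA₀', hu₀, -⟩ := df3 A A' u B B' v e e' σ hσ
    exact ⟨A₀, A₀', u₀, hA₀, hA₀', hu₀⟩

theorem DoubleFunctor.IsDoubleTrivFibration.isDoubleBiequiv (hT : F.IsDoubleTrivFibration) :
    F.IsDoubleBiequiv := by
  obtain ⟨hObj, hHor, hVer, hSq⟩ := hT
  refine ⟨fun B ↦ ?_, fun A E b ↦ ?_, fun B B' v ↦ ?_, hSq⟩
  · obtain ⟨A, rfl⟩ := hObj B
    exact ⟨A, D.hId _, D.isHorEquiv_hId _⟩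
  · obtain ⟨a, rfl⟩ := hHor A E b
    exact ⟨a, D.idSqV _, verticallyInvertible_idSqV _⟩
  · obtain ⟨A, A', u, rfl, rfl, hu⟩ := hVer B B' v
    obtain rfl := eq_of_heq hu
    exact ⟨A, A', u, D.hId _, D.hId _, D.idSqH _, D.weaklyHorInvertible_idSqH _⟩

theorem DoubleFunctor.IsDoubleTrivFibration.isDoubleFibration
    (hT : F.IsDoubleTrivFibration) : F.IsDoubleFibration := by
  obtain ⟨hObj, hHor, hVer, hSq⟩ := hT
  have hSq : F.FullyFaithfulOnSq := hSq
  refine ⟨fun E B b hb ↦ ?_, fun A E c b β hβ ↦ ?_, fun E E' u' B B' v e e' β hβ ↦ ?_⟩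
  · obtain ⟨A, rfl⟩ := hObj B
    obtain ⟨a, rfl⟩ := hHor A E b
    exact ⟨A, a, hSq.isHorEquiv_of_map hHor hb, rfl, HEq.rfl⟩
  · obtain ⟨a, rfl⟩ := hHor A E b
    obtain ⟨α, hα, hαβ⟩ := hSq.exists_verticallyInvertible_lift rfl rfl hβ
    exact ⟨a, α, hα, rfl, hαβ⟩
  · obtain ⟨A, A', u, rfl, rfl, hu⟩ := hVer B B' v
    obtain rfl := eq_of_heq hu
    obtain ⟨f, rfl⟩ := hHor A E e
    obtain ⟨f', rfl⟩ := hHor A' E' e'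
    obtain ⟨α, rfl, -⟩ := hSq _ _ _ _ f f' u u' β
    exact ⟨A, A', u, f, f', α, hSq.weaklyHorInvertible_of_map hHor hβ, rfl, rfl, HEq.rfl,
      HEq.rfl, HEq.rfl, HEq.rfl⟩

end

/-- **A double functor is simultaneously a double biequivalence and a double
fibration if and only if it is a double trivial fibration**, i.e. surjective on
objects, full on horizontal morphisms between objects in the image, surjective
on vertical morphisms, and fully faithful on squares. -/
theorem doubleBiequiv_and_doubleFibration_iff_doubleTrivFibration
    {C D : DoubleCat.{u}} (F : DoubleFunctor C D) :
    (F.IsDoubleBiequiv ∧ F.IsDoubleFibration) ↔ F.IsDoubleTrivFibration :=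
  ⟨fun h ↦ h.1.isDoubleTrivFibration h.2, fun h ↦ ⟨h.isDoubleBiequiv, h.isDoubleFibration⟩⟩

end DoubleCat
end
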